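/- Let L₁,…,L_N be n×n lower triangular matrices with positive diagonal, and w₁,…,w_N positive weights summing to 1. Then L* = Σᵢ wᵢ ⌊Lᵢ⌋ + (Σᵢ wᵢ 𝔻(Lᵢ)^θ)^(1/θ) (diagonal powers entrywise) is the unique minimizer of Σᵢ wᵢ d²(L, Lᵢ) over lower triangular matrices L with positive diagonal, where d²(L,K) = ‖⌊K⌋−⌊L⌋‖_F² + (1/θ²)‖𝔻(K)^θ−𝔻(L)^θ‖_F². -/
import Mathlib
set_option maxHeartbeats 1000000


/-- Cholesky manifold: lower triangular with positive diagonal. -/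
def Chol {n : ℕ} (L : Matrix (Fin n) (Fin n) ℝ) : Prop :=
  (∀ i j, i < j → L i j = 0) ∧ ∀ i, 0 < L i i

/-- Strictly lower triangular part. -/
def slt {n : ℕ} (A : Matrix (Fin n) (Fin n) ℝ) : Matrix (Fin n) (Fin n) ℝ :=
  fun i j => if j < i then A i j else 0

/-- Squared Diagonal Power Euclidean distance. -/
noncomputable def d2Ch {n : ℕ} (θ : ℝ) (L K : Matrix (Fin n) (Fin n) ℝ) : ℝ :=
  (∑ i, ∑ j, (slt K i j - slt L i j)^2) + (1/θ^2) * ∑ i, ((K i i) ^ θ - (L i i) ^ θ)^2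

lemma keylem {N : ℕ} (w c : Fin N → ℝ) (hsum : ∑ k, w k = 1) (a : ℝ) :
    ∑ k, w k * (c k - a)^2
      = (∑ k, w k * (c k - ∑ j, w j * c j)^2) + (a - ∑ j, w j * c j)^2 := by
  set m := ∑ j, w j * c j with hm
  have h2 : ∑ k, (w k * (c k - a)^2 - (w k * (c k - m)^2 + (a - m)^2 * w k))
      = ∑ k, ((-(2*(a-m))) * (w k * c k) + (2*(a-m)*m) * w k) :=
    Finset.sum_congr rfl fun k _ => by ring
  rw [Finset.sum_add_distrib, ← Finset.mul_sum, ← Finset.mul_sum, ← hm, hsum,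
    Finset.sum_sub_distrib, Finset.sum_add_distrib, ← Finset.mul_sum, hsum] at h2
  linear_combination h2

lemma swapWMul {N : ℕ} {ι : Type*} [Fintype ι] (w : Fin N → ℝ) (f : Fin N → ι → ℝ) :
    ∑ k, w k * ∑ i, f k i = ∑ i, ∑ k, w k * f k i := by
  simp only [Finset.mul_sum]; exact Finset.sum_comm

lemma expandWM {N : ℕ} {ι κ : Type*} [Fintype ι] [Fintype κ] (w : Fin N → ℝ) (t : ℝ)
    (f : Fin N → ι → ℝ) (g : Fin N → κ → ℝ) :
    ∑ k, w k * ((∑ i, f k i) + t * ∑ j, g k j)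
      = (∑ i, ∑ k, w k * f k i) + t * ∑ j, ∑ k, w k * g k j := by
  simp only [mul_add, Finset.sum_add_distrib]
  rw [swapWMul w f, show (∑ k, w k * (t * ∑ j, g k j)) = t * ∑ k, w k * ∑ j, g k j from by
    rw [Finset.mul_sum]; exact Finset.sum_congr rfl fun k _ => by ring, swapWMul w g]

lemma sumsq_pos {ι : Type*} [Fintype ι] (f : ι → ℝ) (i : ι) (h : f i ≠ 0) :
    0 < ∑ j, (f j)^2 :=
  Finset.sum_pos' (fun j _ => sq_nonneg _)
    ⟨i, Finset.mem_univ i, lt_of_le_of_ne (sq_nonneg _) (Ne.symm (pow_ne_zero 2 h))⟩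

theorem stmt17 (n : ℕ) (θ : ℝ) (hθ : θ ≠ 0) (N : ℕ)
    (L : Fin N → Matrix (Fin n) (Fin n) ℝ) (w : Fin N → ℝ)
    (hL : ∀ k, Chol (L k)) (hw : ∀ k, 0 < w k) (hsum : ∑ k, w k = 1) :
    let Lstar : Matrix (Fin n) (Fin n) ℝ := fun i j =>
      if j < i then ∑ k, w k * L k i j
      else if i = j then (∑ k, w k * (L k i i) ^ θ) ^ (1/θ)
      else 0
    Chol Lstar ∧ ∀ X : Matrix (Fin n) (Fin n) ℝ, Chol X → X ≠ Lstar →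
      ∑ k, w k * d2Ch θ Lstar (L k) < ∑ k, w k * d2Ch θ X (L k) := by
  intro Lstar
  have hLs : Lstar = fun i j =>
      if j < i then ∑ k, w k * L k i j
      else if i = j then (∑ k, w k * (L k i i) ^ θ) ^ (1/θ)
      else 0 := rfl
  -- nonemptiness of Fin N
  rcases Nat.eq_zero_or_pos N with hN | hN
  · subst hN; simp at hsum
  haveI : Nonempty (Fin N) := Fin.pos_iff_nonempty.mp hN
  -- positivity of diagonal sums
  have hM : ∀ i : Fin n, 0 < ∑ k, w k * (L k i i) ^ θ := fun i =>
    Finset.sum_pos (fun k _ => mul_pos (hw k) (Real.rpow_pos_of_pos ((hL k).2 i) θ))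
      Finset.univ_nonempty
  -- entries of Lstar
  have hdiag : ∀ i, Lstar i i = (∑ k, w k * (L k i i) ^ θ) ^ (1/θ) := by
    intro i; rw [hLs]; simp
  have hlow : ∀ i j : Fin n, j < i → Lstar i j = ∑ k, w k * L k i j := by
    intro i j h; rw [hLs]; simp [h]
  have hChol : Chol Lstar := by
    constructor
    · intro i j hij
      rw [hLs]; simp only
      rw [if_neg (lt_asymm hij), if_neg hij.ne]
    · intro i
      rw [hdiag i]
      exact Real.rpow_pos_of_pos (hM i) _
  have hpow : ∀ i, (Lstar i i) ^ θ = ∑ k, w k * (L k i i) ^ θ := by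
    intro i
    rw [hdiag i, ← Real.rpow_mul (hM i).le, one_div_mul_cancel hθ, Real.rpow_one]
  have hsltLs : ∀ p : Fin n × Fin n,
      slt Lstar p.1 p.2 = ∑ k, w k * slt (L k) p.1 p.2 := by
    intro ⟨i, j⟩
    by_cases h : j < i
    · simp only [slt, if_pos h]
      exact hlow i j h
    · simp only [slt, if_neg h, mul_zero, Finset.sum_const_zero]
  -- the decomposition
  have hF : ∀ Y : Matrix (Fin n) (Fin n) ℝ,
      ∑ k, w k * d2Ch θ Y (L k)
        = ((∑ p : Fin n × Fin n, ∑ k, w k *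
              (slt (L k) p.1 p.2 - ∑ k', w k' * slt (L k') p.1 p.2)^2)
            + 1/θ^2 * ∑ i, ∑ k, w k * ((L k i i)^θ - ∑ k', w k' * (L k' i i)^θ)^2)
          + ((∑ p : Fin n × Fin n,
              (slt Y p.1 p.2 - ∑ k', w k' * slt (L k') p.1 p.2)^2)
            + 1/θ^2 * ∑ i, ((Y i i)^θ - ∑ k', w k' * (L k' i i)^θ)^2) := by
    intro Y
    have ed : ∀ k, d2Ch θ Y (L k)
        = (∑ p : Fin n × Fin n, (slt (L k) p.1 p.2 - slt Y p.1 p.2)^2)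
          + 1/θ^2 * ∑ i, ((L k i i)^θ - (Y i i)^θ)^2 := by
      intro k
      simp only [d2Ch]
      congr 1
      exact (Fintype.sum_prod_type'
        (f := fun a b => (slt (L k) a b - slt Y a b)^2)).symm
    have e1 : ∑ k, w k * d2Ch θ Y (L k)
        = (∑ p : Fin n × Fin n, ∑ k, w k *
              (slt (L k) p.1 p.2 - slt Y p.1 p.2)^2)
          + 1/θ^2 * ∑ i, ∑ k, w k * ((L k i i)^θ - (Y i i)^θ)^2 := by
      have estep : ∑ k, w k * d2Ch θ Y (L k)
          = ∑ k, w k * ((∑ p : Fin n × Fin n,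
              (slt (L k) p.1 p.2 - slt Y p.1 p.2)^2)
            + 1/θ^2 * ∑ i, ((L k i i)^θ - (Y i i)^θ)^2) :=
        Finset.sum_congr rfl fun k _ => by rw [ed k]
      rw [estep]
      simp only [mul_add, Finset.sum_add_distrib, Finset.mul_sum]
      congr 1
      · exact Finset.sum_comm
      · rw [Finset.sum_comm]
        exact Finset.sum_congr rfl fun i _ =>
          Finset.sum_congr rfl fun k _ => by ring
    rw [e1]
    have e2 : ∑ p : Fin n × Fin n, ∑ k, w k * (slt (L k) p.1 p.2 - slt Y p.1 p.2)^2
        = ∑ p : Fin n × Fin n, ((∑ k, w k *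
            (slt (L k) p.1 p.2 - ∑ k', w k' * slt (L k') p.1 p.2)^2)
          + (slt Y p.1 p.2 - ∑ k', w k' * slt (L k') p.1 p.2)^2) :=
      Finset.sum_congr rfl fun p _ =>
        keylem w (fun k => slt (L k) p.1 p.2) hsum (slt Y p.1 p.2)
    have e3 : ∑ i, ∑ k, w k * ((L k i i)^θ - (Y i i)^θ)^2
        = ∑ i, ((∑ k, w k * ((L k i i)^θ - ∑ k', w k' * (L k' i i)^θ)^2)
          + ((Y i i)^θ - ∑ k', w k' * (L k' i i)^θ)^2) :=
      Finset.sum_congr rfl fun i _ =>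
        keylem w (fun k => (L k i i)^θ) hsum ((Y i i)^θ)
    rw [e2, e3, Finset.sum_add_distrib, Finset.sum_add_distrib]
    ring
  refine ⟨hChol, ?_⟩
  intro X hX hne
  rw [hF X, hF Lstar]
  -- the residual at Lstar vanishes
  have h0a : ∑ p : Fin n × Fin n,
      (slt Lstar p.1 p.2 - ∑ k', w k' * slt (L k') p.1 p.2)^2 = 0 := by
    refine Finset.sum_eq_zero fun p _ => ?_
    rw [hsltLs p, sub_self]
    exact zero_pow two_ne_zero
  have h0b : ∑ i, ((Lstar i i)^θ - ∑ k', w k' * (L k' i i)^θ)^2 = 0 := by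
    refine Finset.sum_eq_zero fun i _ => ?_
    rw [hpow i, sub_self]
    exact zero_pow two_ne_zero
  rw [h0a, h0b, mul_zero, add_zero, add_zero]
  -- the residual at X is positive
  apply lt_add_of_pos_right
  have ht : (0:ℝ) < 1/θ^2 := by positivity
  have hex : ∃ i j, X i j ≠ Lstar i j := by
    by_contra hc
    push_neg at hc
    exact hne (Matrix.ext fun i j => hc i j)
  obtain ⟨i, j, hij⟩ := hex
  rcases lt_trichotomy i j with h | h | h
  · exact absurd (by rw [hX.1 i j h, hChol.1 i j h]) hij
  · -- diagonal case
    subst h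
    have hne2 : (X i i)^θ ≠ ∑ k', w k' * (L k' i i)^θ := by
      intro heq
      have h2 : ((X i i)^θ)^(1/θ) = ((Lstar i i)^θ)^(1/θ) := by rw [heq, hpow i]
      rw [← Real.rpow_mul (hX.2 i).le, ← Real.rpow_mul (hChol.2 i).le,
        mul_one_div_cancel hθ, Real.rpow_one, Real.rpow_one] at h2
      exact hij h2
    have hS2 : 0 < ∑ i', ((X i' i')^θ - ∑ k', w k' * (L k' i' i')^θ)^2 :=
      sumsq_pos (fun i' => (X i' i')^θ - ∑ k', w k' * (L k' i' i')^θ) i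
        (sub_ne_zero_of_ne hne2)
    have hS1 : 0 ≤ ∑ p : Fin n × Fin n,
        (slt X p.1 p.2 - ∑ k', w k' * slt (L k') p.1 p.2)^2 :=
      Finset.sum_nonneg fun p _ => sq_nonneg _
    nlinarith [mul_pos ht hS2]
  · -- strictly lower case
    have hne1 : slt X i j - ∑ k', w k' * slt (L k') i j ≠ 0 := by
      apply sub_ne_zero_of_ne
      simp only [slt, if_pos h]
      rw [← hlow i j h]
      exact hij
    have hS1 : 0 < ∑ p : Fin n × Fin n,
        (slt X p.1 p.2 - ∑ k', w k' * slt (L k') p.1 p.2)^2 :=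
      sumsq_pos (fun p : Fin n × Fin n =>
        slt X p.1 p.2 - ∑ k', w k' * slt (L k') p.1 p.2) (i, j) hne1
    have hS2 : 0 ≤ ∑ i', ((X i' i')^θ - ∑ k', w k' * (L k' i' i')^θ)^2 :=
      Finset.sum_nonneg fun i' _ => sq_nonneg _
    nlinarith [mul_nonneg ht.le hS2]
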